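/- Let Λ ⊆ P be a finite-index sublattice of a lattice P with even bilinear form, and p a prime. Every element in the kernel of ι_p : Λ/pΛ → P/pP lies in the set Λ_p := {[x] ∈ Λ/pΛ : b([x],[y]) = 0 mod p for all [y] ∈ Λ/pΛ, and x² ≡ 0 mod 2p²}. -/

import Mathlib

/-- The natural map `Λ/pΛ → P/pP` induced by the inclusion of a sublattice `Λ ⊆ P`. -/
noncomputable def inducedModP (P : Type*) [AddCommGroup P] [Module ℤ P]
    (Λ : Submodule ℤ P) (p : ℕ) :
    (Λ ⧸ ((Ideal.span {(p : ℤ)}) • (⊤ : Submodule ℤ Λ))) →ₗ[ℤ]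
      (P ⧸ ((Ideal.span {(p : ℤ)}) • (⊤ : Submodule ℤ P))) :=
  (Submodule.mapQ (τ₁₂ := RingHom.id ℤ) ((Ideal.span {(p : ℤ)}) • (⊤ : Submodule ℤ Λ))
    ((Ideal.span {(p : ℤ)}) • (⊤ : Submodule ℤ P))
    { toFun := Subtype.val, map_add' := fun _ _ => rfl,
      map_smul' := fun r x => by simp [← Int.cast_smul_eq_zsmul ℤ] }
    (Submodule.smul_le.2 fun r hr n _ => by
      have : @IsScalarTower ℤ ℤ P
          (Semiring.toModule (R := ℤ)).toDistribMulAction.toDistribSMul.toSMulZeroClass.toSMul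
          (‹Module ℤ P›).toDistribMulAction.toDistribSMul.toSMulZeroClass.toSMul
          (‹Module ℤ P›).toDistribMulAction.toDistribSMul.toSMulZeroClass.toSMul :=
        @IsScalarTower.left ℤ P _ (‹Module ℤ P›).toDistribMulAction.toMulAction
      simpa using Submodule.smul_mem_smul hr Submodule.mem_top)).toAddMonoidHom.toIntLinearMap

/-- Let `P` be an even lattice (nondegenerate symmetric bilinear form `B` with `B x x`
even), `Λ ⊆ P` a finite-index sublattice, `p` a prime.  Every class in the kernel of
`ι_p : Λ/pΛ → P/pP` lies in the set
`Λ_p = {[x] : b([x],[y]) ≡ 0 mod p for all [y], and x² ≡ 0 mod 2p²}`. -/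
theorem stmt_7 (P : Type*) [AddCommGroup P] [Module ℤ P]
    [Module.Free ℤ P] [Module.Finite ℤ P]
    (B : P →ₗ[ℤ] P →ₗ[ℤ] ℤ) (hsymm : B.IsSymm) (hnd : B.Nondegenerate)
    (heven : ∀ x : P, Even (B x x))
    (Λ : Submodule ℤ P) (hfin : Λ.toAddSubgroup.index ≠ 0)
    (p : ℕ) (hp : p.Prime) (x : Λ)
    (hker : inducedModP P Λ p (Submodule.Quotient.mk x) = 0) :
    (∀ y : Λ, (p : ℤ) ∣ B (x : P) (y : P)) ∧ (2 * (p : ℤ) ^ 2 ∣ B (x : P) (x : P)) := by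
  have hmem : (x : P) ∈ (Ideal.span {(p : ℤ)}) • (⊤ : Submodule ℤ P) := by
    have h2 : (Submodule.Quotient.mk (x : P) :
        P ⧸ ((Ideal.span {(p : ℤ)}) • (⊤ : Submodule ℤ P))) = 0 := hker
    exact (Submodule.Quotient.mk_eq_zero _).1 h2
  obtain ⟨z, hz⟩ : ∃ z : P, (x : P) = (p : ℤ) • z := by
    have : @IsScalarTower ℤ ℤ P
        (Semiring.toModule (R := ℤ)).toDistribMulAction.toDistribSMul.toSMulZeroClass.toSMul
        (‹Module ℤ P›).toDistribMulAction.toDistribSMul.toSMulZeroClass.toSMul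
        (‹Module ℤ P›).toDistribMulAction.toDistribSMul.toSMulZeroClass.toSMul :=
      @IsScalarTower.left ℤ P _ (‹Module ℤ P›).toDistribMulAction.toMulAction
    refine Submodule.smul_induction_on hmem ?_ ?_
    · rintro r hr n -
      obtain ⟨c, rfl⟩ := Ideal.mem_span_singleton.1 hr
      exact ⟨c • n, (int_smul_eq_zsmul _ _ _).trans (mul_zsmul _ _ _)⟩
    · rintro m n ⟨zm, rfl⟩ ⟨zn, rfl⟩
      exact ⟨zm + zn, (zsmul_add _ _ _).symm⟩
  have hB : ∀ w : P, B (x : P) w = (p : ℤ) * B z w := by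
    intro w
    rw [hz, map_zsmul]
    show (LinearMap.applyₗ (R := ℤ) w) ((p : ℤ) • B z) = _
    rw [map_zsmul, zsmul_eq_mul]
    rfl
  constructor
  · intro y
    exact ⟨B z y, hB y⟩
  · obtain ⟨k, hk⟩ := heven z
    refine ⟨k, ?_⟩
    rw [hB, hz, map_zsmul, zsmul_eq_mul, hk]
    push_cast
    ring
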